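/- arXiv:1411.6182 — 4 statements merged into one kernel-verified Lean document; each statement's English description precedes it below -/
import Mathlib

section
/- Let κ ∈ ℝ with κ ≠ 0 and λ ∈ ℝ. Suppose u : ℝ → ℝ is twice continuously differentiable on [0,1], satisfies 1 + κ·(u'(x))² > 0 and −u''(x) = λ·u(x)·(1 + κ·(u'(x))²)^(3/2) for all x ∈ [0,1]. Then the function x ↦ (λκ/2)·u(x)² − 1/√(1 + κ·(u'(x))²) is constant on [0,1]; that is, for all x, y ∈ [0,1], (λκ/2)·u(x)² − 1/√(1 + κ·(u'(x))²) = (λκ/2)·u(y)² − 1/√(1 + κ·(u'(y))²). -/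
open Set Real Filter

noncomputable section

/-- `u` is twice continuously differentiable on `[a,b]`, satisfies
`1 + κ (u')² > 0` and the ODE `-u'' = λ u (1 + κ (u')²)^(3/2)` on `[a,b]`. -/
def SolODE (κ lam : ℝ) (u : ℝ → ℝ) (a b : ℝ) : Prop :=
  (∀ x ∈ Set.Icc a b, DifferentiableAt ℝ u x) ∧
  (∀ x ∈ Set.Icc a b, DifferentiableAt ℝ (deriv u) x) ∧
  ContinuousOn (deriv (deriv u)) (Set.Icc a b) ∧
  (∀ x ∈ Set.Icc a b, 0 < 1 + κ * (deriv u x) ^ 2) ∧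
  (∀ x ∈ Set.Icc a b,
    -(deriv (deriv u) x) = lam * u x * (1 + κ * (deriv u x) ^ 2) ^ ((3 : ℝ) / 2))

/-- `u` is a solution of problem (P) on `[0,1]` with Dirichlet boundary conditions. -/
def SolP (κ lam : ℝ) (u : ℝ → ℝ) : Prop :=
  SolODE κ lam u 0 1 ∧ u 0 = 0 ∧ u 1 = 0

/-- `u` is an `S⁺ₙ`-solution of problem (P): a nontrivial solution with exactly
`n - 1` zeros in `(0,1)`, all zeros in `[0,1]` simple, and positive near `0`. -/
def SPlus (κ lam : ℝ) (n : ℕ) (u : ℝ → ℝ) : Prop :=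
  SolP κ lam u ∧
  (∃ x ∈ Set.Icc (0 : ℝ) 1, u x ≠ 0) ∧
  {x ∈ Set.Ioo (0 : ℝ) 1 | u x = 0}.ncard = n - 1 ∧
  (∀ τ ∈ Set.Icc (0 : ℝ) 1, u τ = 0 → deriv u τ ≠ 0) ∧
  (∃ δ > 0, ∀ x ∈ Set.Ioo (0 : ℝ) δ, 0 < u x)

/-- The constant `B = ∫₀¹ dθ/√(θ⁻⁴ - 1)`. -/
def Bconst : ℝ := ∫ θ in (0 : ℝ)..1, 1 / Real.sqrt ((θ ^ 4)⁻¹ - 1)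

/-- The sup-norm of `u` over `[0,1]`. -/
def supNorm (u : ℝ → ℝ) : ℝ := sSup ((fun x => |u x|) '' Set.Icc (0 : ℝ) 1)

/-- The time map `J(λ, ξ) = √(-κ) ∫₀¹ ξ/√(1 - (1 - λκξ²(1-θ²)/2)⁻²) dθ`. -/
def Jmap (κ lam ξ : ℝ) : ℝ :=
  Real.sqrt (-κ) *
    ∫ θ in (0 : ℝ)..1,
      ξ / Real.sqrt (1 - ((1 - lam * κ / 2 * ξ ^ 2 * (1 - θ ^ 2))⁻¹) ^ 2)

theorem stmt1 (κ lam : ℝ) (hκ : κ ≠ 0) (u : ℝ → ℝ) (hu : SolODE κ lam u 0 1) :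
    ∀ x ∈ Set.Icc (0 : ℝ) 1, ∀ y ∈ Set.Icc (0 : ℝ) 1,
      lam * κ / 2 * u x ^ 2 - 1 / Real.sqrt (1 + κ * (deriv u x) ^ 2) =
        lam * κ / 2 * u y ^ 2 - 1 / Real.sqrt (1 + κ * (deriv u y) ^ 2) := by
  obtain ⟨hu1, hu2, hu3, hu4, hu5⟩ := hu
  set E : ℝ → ℝ := fun x => lam * κ / 2 * u x ^ 2 - 1 / Real.sqrt (1 + κ * (deriv u x) ^ 2)
    with hE
  have key : ∀ x ∈ Set.Icc (0:ℝ) 1, HasDerivAt E 0 x := by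
    intro x hx
    have hv : 0 < 1 + κ * (deriv u x) ^ 2 := hu4 x hx
    have hs : 0 < Real.sqrt (1 + κ * (deriv u x) ^ 2) := Real.sqrt_pos.2 hv
    have hdu : HasDerivAt u (deriv u x) x := (hu1 x hx).hasDerivAt
    have hddu : HasDerivAt (deriv u) (deriv (deriv u) x) x := (hu2 x hx).hasDerivAt
    have h1 : HasDerivAt (fun x => 1 + κ * (deriv u x) ^ 2)
        (κ * (2 * deriv u x * deriv (deriv u) x)) x := by
      have := ((hddu.pow 2).const_mul κ).const_add 1
      simpa [mul_comm, mul_assoc, mul_left_comm] using this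
    have h2 : HasDerivAt (fun x => Real.sqrt (1 + κ * (deriv u x) ^ 2))
        (κ * (2 * deriv u x * deriv (deriv u) x) / (2 * Real.sqrt (1 + κ * (deriv u x) ^ 2))) x :=
      h1.sqrt hv.ne'
    have h3 := h2.inv hs.ne'
    have h4 : HasDerivAt (fun x => lam * κ / 2 * u x ^ 2)
        (lam * κ / 2 * (2 * u x * deriv u x)) x := by
      have := (hdu.pow 2).const_mul (lam * κ / 2)
      simpa [mul_comm, mul_assoc, mul_left_comm] using this
    have h5 := h4.sub h3
    have hsq : Real.sqrt (1 + κ * (deriv u x) ^ 2) ^ 2 = 1 + κ * (deriv u x) ^ 2 :=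
      Real.sq_sqrt hv.le
    have hode : deriv (deriv u) x =
        -(lam * u x * ((1 + κ * (deriv u x) ^ 2) * Real.sqrt (1 + κ * (deriv u x) ^ 2))) := by
      have h35 : (1 + κ * (deriv u x) ^ 2) ^ ((3:ℝ)/2)
          = (1 + κ * (deriv u x) ^ 2) * Real.sqrt (1 + κ * (deriv u x) ^ 2) := by
        rw [show (3:ℝ)/2 = 1 + 1/2 by norm_num, Real.rpow_add hv, Real.rpow_one,
          ← Real.sqrt_eq_rpow]
      have := hu5 x hx
      rw [h35] at this
      linarith
    have hzero : lam * κ / 2 * (2 * u x * deriv u x) -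
        -(κ * (2 * deriv u x * deriv (deriv u) x) / (2 * Real.sqrt (1 + κ * (deriv u x) ^ 2)))
          / Real.sqrt (1 + κ * (deriv u x) ^ 2) ^ 2 = 0 := by
      rw [hode, hsq]
      field_simp
      ring
    have h6 : HasDerivAt (fun x => lam * κ / 2 * u x ^ 2 -
        (Real.sqrt (1 + κ * (deriv u x) ^ 2))⁻¹) 0 x := by
      rw [← hzero]; exact h5
    simpa [hE, one_div] using h6
  have hconst : ∀ x ∈ Set.Icc (0:ℝ) 1, E x = E 0 := by
    apply constant_of_has_deriv_right_zero
    · exact fun x hx => ((key x hx).continuousAt).continuousWithinAt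
    · exact fun x hx => ((key x (Set.mem_Icc_of_Ico hx)).hasDerivWithinAt)
  intro x hx y hy
  calc E x = E 0 := hconst x hx
    _ = E y := (hconst y hy).symm
end
end

section
/- Let κ > 0, λ > 0 and let n ≥ 1 be an integer. If u is an S⁺ₙ-solution of problem (P) for parameters (κ, λ), then λ < n²π². -/
/-!
Between consecutive zeros `a < b` of `u`, say with `u > 0` on `(a, b)`, compare `u` with
`sin (√λ (x - a))`: their Wronskian has derivative `λ u sin (√λ (x - a)) ((1 + κ u'²)^(3/2) - 1) ≥ 0`.
If `b - a ≥ π/√λ`, the Wronskian vanishes at `a` and is `≤ 0` at `a + π/√λ`, hence is identically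
zero there, which forces `u' = 0` on that interval, impossible as `u(a) = 0 < u`. So every nodal
interval is shorter than `π/√λ`; the `n + 1` zeros of `u` in `[0, 1]` cut it into `n` such
intervals, so `1 < nπ/√λ`.
-/

open Set Real Filter

noncomputable section

/-- The Wronskian of `u` against `y ↦ sin (s (y - a))`, the solution of `v'' + s² v = 0` vanishing
at `a`. -/
def sturmWronskian (s a : ℝ) (u : ℝ → ℝ) (y : ℝ) : ℝ :=
  u y * (s * cos (s * (y - a))) - deriv u y * sin (s * (y - a))

theorem hasDerivAt_sturmWronskian {s a x u'' : ℝ} {u : ℝ → ℝ} (hu : DifferentiableAt ℝ u x)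
    (hu' : HasDerivAt (deriv u) u'' x) :
    HasDerivAt (sturmWronskian s a u) (-(u'' + s ^ 2 * u x) * sin (s * (x - a))) x := by
  have hlin : HasDerivAt (fun y : ℝ => s * (y - a)) s x := by
    simpa using ((hasDerivAt_id x).sub_const a).const_mul s
  have hsin := (hasDerivAt_sin (s * (x - a))).comp x hlin
  have hcos := (hasDerivAt_cos (s * (x - a))).comp x hlin
  exact ((hu.hasDerivAt.mul (hcos.const_mul s)).sub (hu'.mul hsin)).congr_deriv (by
    simp only [Function.comp_apply]; ring)

theorem one_lt_one_add_mul_sq_rpow {κ t p : ℝ} (hκ : 0 < κ) (ht : t ≠ 0) (hp : 0 < p) :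
    1 < (1 + κ * t ^ 2) ^ p :=
  one_lt_rpow (lt_add_of_pos_right 1 (by positivity)) hp

theorem exists_deriv_ne_zero_of_ne {f : ℝ → ℝ} {a b : ℝ} (hab : a < b)
    (hf : ∀ x ∈ Icc a b, DifferentiableAt ℝ f x) (hne : f a ≠ f b) :
    ∃ c ∈ Ioo a b, deriv f c ≠ 0 := by
  obtain ⟨c, hc, hslope⟩ := exists_deriv_eq_slope f hab
    (fun x hx => (hf x hx).continuousAt.continuousWithinAt)
    (fun x hx => (hf x (Ioo_subset_Icc_self hx)).differentiableWithinAt)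
  exact ⟨c, hc, hslope ▸ div_ne_zero (sub_ne_zero.2 hne.symm) (sub_pos.2 hab).ne'⟩

theorem IsPreconnected.forall_pos_or_forall_neg {S : Set ℝ} {f : ℝ → ℝ} (hS : IsPreconnected S)
    (hf : ContinuousOn f S) (hne : ∀ x ∈ S, f x ≠ 0) :
    (∀ x ∈ S, 0 < f x) ∨ (∀ x ∈ S, f x < 0) := by
  by_contra! h
  obtain ⟨⟨x, hxS, hx⟩, ⟨y, hyS, hy⟩⟩ := h
  obtain ⟨z, hzS, hz⟩ := hS.intermediate_value hxS hyS hf ⟨hx, hy⟩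
  exact hne z hzS hz

namespace SolODE

variable {κ lam a b : ℝ} {u : ℝ → ℝ}

theorem mono {c d : ℝ} (hu : SolODE κ lam u a b) (hcd : Icc c d ⊆ Icc a b) :
    SolODE κ lam u c d := by
  obtain ⟨hd1, hd2, hc, hpos, hode⟩ := hu
  exact ⟨fun x hx => hd1 x (hcd hx), fun x hx => hd2 x (hcd hx), hc.mono hcd,
    fun x hx => hpos x (hcd hx), fun x hx => hode x (hcd hx)⟩

theorem neg (hu : SolODE κ lam u a b) : SolODE κ lam (-u) a b := by
  obtain ⟨hd1, hd2, hc, hpos, hode⟩ := hu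
  simp only [SolODE, deriv.neg', deriv.fun_neg', Pi.neg_apply, neg_sq]
  refine ⟨fun x hx => (hd1 x hx).neg, fun x hx => (hd2 x hx).neg, hc.neg, hpos, fun x hx => ?_⟩
  linear_combination -hode x hx

theorem hasDerivAt_sturmWronskian (hlam : 0 ≤ lam) (hu : SolODE κ lam u a b) {c x : ℝ}
    (hx : x ∈ Icc a b) :
    HasDerivAt (sturmWronskian √lam c u)
      (lam * u x * sin (√lam * (x - c)) * ((1 + κ * deriv u x ^ 2) ^ (3 / 2 : ℝ) - 1)) x := by
  obtain ⟨hd1, hd2, -, -, hode⟩ := hu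
  refine (_root_.hasDerivAt_sturmWronskian (hd1 x hx) (hd2 x hx).hasDerivAt).congr_deriv ?_
  rw [sq_sqrt hlam]
  linear_combination sin (√lam * (x - c)) * hode x hx

theorem not_forall_pos_of_mul_sub_eq_pi {e : ℝ} (hκ : 0 < κ) (hlam : 0 < lam)
    (hu : SolODE κ lam u a e) (hse : √lam * (e - a) = π) (hua : u a = 0) (hue : 0 ≤ u e) :
    ¬ ∀ x ∈ Ioo a e, 0 < u x := by
  intro hpos
  set s := √lam
  have hs : 0 < s := sqrt_pos.2 hlam
  have hae : a < e := by
    by_contra! h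
    nlinarith [pi_pos]
  have hsin : ∀ x ∈ Ioo a e, 0 < sin (s * (x - a)) := fun x hx =>
    sin_pos_of_pos_of_lt_pi (mul_pos hs (sub_pos.2 hx.1))
      (hse ▸ mul_lt_mul_of_pos_left (sub_lt_sub_right hx.2 a) hs)
  set W := sturmWronskian s a u
  have hW : ∀ x ∈ Icc a e, HasDerivAt W
      (lam * u x * sin (s * (x - a)) * ((1 + κ * deriv u x ^ 2) ^ (3 / 2 : ℝ) - 1)) x :=
    fun x hx => hu.hasDerivAt_sturmWronskian hlam.le hx
  have hmono : MonotoneOn W (Icc a e) := by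
    refine monotoneOn_of_hasDerivWithinAt_nonneg (convex_Icc a e) (f' := fun x =>
      lam * u x * sin (s * (x - a)) * ((1 + κ * deriv u x ^ 2) ^ (3 / 2 : ℝ) - 1))
      (fun x hx => (hW x hx).continuousAt.continuousWithinAt) (fun x hx => ?_) (fun x hx => ?_)
    · exact (hW x (interior_subset hx)).hasDerivWithinAt
    · rw [interior_Icc] at hx
      have hA := one_le_rpow (le_add_of_nonneg_right (by positivity : 0 ≤ κ * deriv u x ^ 2))
        (by norm_num : (0 : ℝ) ≤ 3 / 2)
      exact mul_nonneg (mul_pos (mul_pos hlam (hpos x hx)) (hsin x hx)).le (sub_nonneg.2 hA)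
  have hWa : W a = 0 := by simp [W, sturmWronskian, hua]
  have hWe : W e ≤ 0 := by
    simp only [W, sturmWronskian, hse, cos_pi, sin_pi]
    nlinarith
  have hW0 : ∀ x ∈ Icc a e, W x = 0 := fun x hx =>
    le_antisymm ((hmono hx ⟨hae.le, le_rfl⟩ hx.2).trans hWe)
      (hWa ▸ hmono ⟨le_rfl, hae.le⟩ hx hx.1)
  obtain ⟨c, hc, hc'⟩ : ∃ c ∈ Ioo a e, deriv u c ≠ 0 := by
    set m := (a + e) / 2 with hm
    have hm' : m ∈ Ioo a e := ⟨by linarith, by linarith⟩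
    obtain ⟨c, hc, hc'⟩ := exists_deriv_ne_zero_of_ne hm'.1
      (fun x hx => hu.1 x ⟨hx.1, hx.2.trans hm'.2.le⟩) (hua ▸ (hpos m hm').ne)
    exact ⟨c, ⟨hc.1, hc.2.trans hm'.2⟩, hc'⟩
  have hWc : HasDerivAt W 0 c := (hasDerivAt_const c 0).congr_of_eventuallyEq
    (eventually_of_mem (Ioo_mem_nhds hc.1 hc.2) fun x hx => hW0 x (Ioo_subset_Icc_self hx))
  have hA := one_lt_one_add_mul_sq_rpow hκ hc' (by norm_num : (0 : ℝ) < 3 / 2)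
  have := mul_pos (mul_pos (mul_pos hlam (hpos c hc)) (hsin c hc)) (sub_pos.2 hA)
  exact this.ne' ((hW c (Ioo_subset_Icc_self hc)).unique hWc)

theorem sub_lt_pi_div_sqrt (hκ : 0 < κ) (hlam : 0 < lam) (hu : SolODE κ lam u a b)
    (hua : u a = 0) (hub : u b = 0) (hpos : ∀ x ∈ Ioo a b, 0 < u x) : b - a < π / √lam := by
  have hs : 0 < √lam := sqrt_pos.2 hlam
  by_contra! hba
  set e := a + π / √lam
  have hae : a < e := by linarith [div_pos pi_pos hs]
  have heb : e ≤ b := by linarith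
  have hue : 0 ≤ u e := heb.lt_or_eq.elim (fun h => (hpos e ⟨hae, h⟩).le) (fun h => h ▸ hub.ge)
  refine (hu.mono (Icc_subset_Icc_right heb)).not_forall_pos_of_mul_sub_eq_pi hκ hlam
    (by rw [add_sub_cancel_left, mul_div_cancel₀ _ hs.ne']) hua hue fun x hx => hpos x ⟨hx.1, hx.2.trans_le heb⟩

theorem sub_lt_pi_div_sqrt_of_ne_zero (hκ : 0 < κ) (hlam : 0 < lam) (hu : SolODE κ lam u a b)
    (hua : u a = 0) (hub : u b = 0) (hne : ∀ x ∈ Ioo a b, u x ≠ 0) : b - a < π / √lam := by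
  have hcont : ContinuousOn u (Ioo a b) := fun x hx =>
    (hu.1 x (Ioo_subset_Icc_self hx)).continuousAt.continuousWithinAt
  rcases isPreconnected_Ioo.forall_pos_or_forall_neg hcont hne with hpos | hneg
  · exact hu.sub_lt_pi_div_sqrt hκ hlam hua hub hpos
  · exact hu.neg.sub_lt_pi_div_sqrt hκ hlam (by simp [hua]) (by simp [hub])
      fun x hx => neg_pos.2 (hneg x hx)

end SolODE

theorem finite_zeros_of_deriv_ne_zero {u : ℝ → ℝ} {K : Set ℝ} (hK : IsCompact K)
    (hd : ∀ x ∈ K, DifferentiableAt ℝ u x) (hsimple : ∀ x ∈ K, u x = 0 → deriv u x ≠ 0) :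
    {x ∈ K | u x = 0}.Finite := by
  have : {x | u x ≠ 0} ∈ codiscreteWithin K := by
    refine mem_codiscreteWithin_iff_forall_mem_nhdsNE.2 fun x hx =>
      mem_of_superset ?_ subset_union_left
    by_cases hux : u x = 0
    · exact (hd x hx).hasDerivAt.eventually_ne (hsimple x hx hux)
    · exact nhdsWithin_le_nhds ((hd x hx).continuousAt.eventually_ne hux)
  convert hK.finite_sdiff_of_mem_codiscreteWithin this using 1
  ext x
  simp

theorem ncard_sep_Icc {a b : ℝ} {u : ℝ → ℝ} (hab : a < b) (hua : u a = 0) (hub : u b = 0)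
    (hfin : {x ∈ Ioo a b | u x = 0}.Finite) :
    {x ∈ Icc a b | u x = 0}.ncard = {x ∈ Ioo a b | u x = 0}.ncard + 2 := by
  have : {x ∈ Icc a b | u x = 0} = insert a (insert b {x ∈ Ioo a b | u x = 0}) := by
    ext x
    simp only [mem_ofPred_eq, mem_insert_iff, mem_Icc, mem_Ioo]
    constructor
    · rintro ⟨⟨hax, hxb⟩, hx⟩
      rcases hax.eq_or_lt with rfl | hax
      · exact Or.inl rfl
      rcases hxb.eq_or_lt with rfl | hxb
      · exact Or.inr (Or.inl rfl)
      · exact Or.inr (Or.inr ⟨⟨hax, hxb⟩, hx⟩)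
    · rintro (rfl | rfl | ⟨⟨hax, hxb⟩, hx⟩)
      · exact ⟨⟨le_rfl, hab.le⟩, hua⟩
      · exact ⟨⟨hab.le, le_rfl⟩, hub⟩
      · exact ⟨⟨hax.le, hxb.le⟩, hx⟩
  rw [this, ncard_insert_of_notMem (by simp [hab.ne]) (hfin.insert b),
    ncard_insert_of_notMem (by simp) hfin]

theorem Fin.sum_succ_sub_castSucc {n : ℕ} (x : Fin (n + 1) → ℝ) :
    ∑ i : Fin n, (x i.succ - x i.castSucc) = x (Fin.last n) - x 0 := by
  induction n with
  | zero => simp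
  | succ n ih =>
    rw [Fin.sum_univ_castSucc]
    simp_rw [Fin.succ_castSucc]
    rw [ih fun i => x i.castSucc, Fin.succ_last, Fin.castSucc_zero]
    ring

theorem Finset.max'_sub_min'_lt_mul {s : Finset ℝ} {n : ℕ} {L : ℝ} (hs : s.card = n + 1)
    (hn : 1 ≤ n) (hne : s.Nonempty)
    (hgap : ∀ a ∈ s, ∀ b ∈ s, a < b → (∀ x ∈ s, x ∉ Set.Ioo a b) → b - a < L) :
    s.max' hne - s.min' hne < n * L := by
  set x := s.orderEmbOfFin hs
  have hmem : ∀ i, x i ∈ s := s.orderEmbOfFin_mem hs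
  have hx0 : x 0 = s.min' hne := s.orderEmbOfFin_zero hs n.succ_pos
  have hxn : x (Fin.last n) = s.max' hne := s.orderEmbOfFin_last hs n.succ_pos
  have hstep : ∀ i : Fin n, x i.succ - x i.castSucc < L := by
    intro i
    refine hgap _ (hmem _) _ (hmem _) (x.strictMono i.castSucc_lt_succ) fun y hy hyI => ?_
    obtain ⟨j, rfl⟩ : y ∈ Set.range x := by rwa [s.range_orderEmbOfFin hs]
    have h1 := x.lt_iff_lt.1 hyI.1
    have h2 := x.lt_iff_lt.1 hyI.2
    rw [Fin.lt_def] at h1 h2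
    simp only [Fin.val_castSucc, Fin.val_succ, Order.lt_add_one_iff] at h1 h2
    omega
  have : Nonempty (Fin n) := ⟨⟨0, hn⟩⟩
  calc s.max' hne - s.min' hne = ∑ i : Fin n, (x i.succ - x i.castSucc) := by
        rw [Fin.sum_succ_sub_castSucc, hx0, hxn]
    _ < ∑ _i : Fin n, L := Finset.sum_lt_sum_of_nonempty Finset.univ_nonempty fun i _ => hstep i
    _ = n * L := by simp

theorem stmt2 (κ lam : ℝ) (hκ : 0 < κ) (hlam : 0 < lam) (n : ℕ) (hn : 1 ≤ n)
    (u : ℝ → ℝ) (hu : SPlus κ lam n u) :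
    lam < (n : ℝ) ^ 2 * Real.pi ^ 2 := by
  obtain ⟨⟨hsol, hu0, hu1⟩, -, hcount, hsimple, -⟩ := hu
  have hfin := finite_zeros_of_deriv_ne_zero isCompact_Icc hsol.1 hsimple
  set s := hfin.toFinset
  have hcard : s.card = n + 1 := by
    rw [← ncard_eq_toFinset_card _ hfin, ncard_sep_Icc zero_lt_one hu0 hu1
      (hfin.subset fun x hx => ⟨Ioo_subset_Icc_self hx.1, hx.2⟩), hcount]
    omega
  have hne : s.Nonempty := ⟨0, by simp [s, hu0]⟩
  have hmin : s.min' hne = 0 :=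
    le_antisymm (s.min'_le 0 (by simp [s, hu0])) (s.le_min' hne 0 fun x hx => by simp_all [s])
  have hmax : s.max' hne = 1 :=
    le_antisymm (s.max'_le hne 1 fun x hx => by simp_all [s]) (s.le_max' 1 (by simp [s, hu1]))
  have h1 : 1 < n * (π / √lam) := by
    have := s.max'_sub_min'_lt_mul hcard hn hne fun a ha b hb hab hgap => by
      simp only [s, Finite.mem_toFinset, mem_ofPred_eq] at ha hb hgap
      exact (hsol.mono (Icc_subset_Icc ha.1.1 hb.1.2)).sub_lt_pi_div_sqrt_of_ne_zero hκ hlam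
        ha.2 hb.2 fun x hx hux => hgap x ⟨⟨ha.1.1.trans hx.1.le, hx.2.le.trans hb.1.2⟩, hux⟩ hx
    rwa [hmin, hmax, sub_zero] at this
  have hs : 0 < √lam := sqrt_pos.2 hlam
  rwa [mul_div_assoc', lt_div_iff₀ hs, one_mul, sqrt_lt' (by positivity), mul_pow] at h1
end
end

section
/- Let κ ∈ ℝ with κ ≠ 0, λ > 0, and let x_l < x_r be real numbers. Suppose u : ℝ → ℝ is twice continuously differentiable on [x_l, x_r], satisfies 1 + κ·(u'(x))² > 0 and −u''(x) = λ·u(x)·(1 + κ·(u'(x))²)^(3/2) for all x ∈ [x_l, x_r], with u(x_l) = u(x_r) = 0 and u(x) > 0 for all x ∈ (x_l, x_r). Then: (i) u is symmetric about the midpoint, i.e. u(x_l + x_r − x) = u(x) for all x ∈ [x_l, x_r]; (ii) u' is strictly decreasing on [x_l, x_r]; and (iii) u'(m) = 0 where m = (x_l + x_r)/2, and m is the only zero of u' in [x_l, x_r]. -/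
open Set Real Filter

noncomputable section

/-!
Since `u > 0` inside, the equation forces `u'' < 0`, so `u'` is strictly decreasing and, by Rolle,
vanishes at exactly one point `c`. The equation is autonomous and invariant under `u' ↦ -u'`, so
`t ↦ (u (2c - t), -u' (2c - t))` solves the same first-order system in the phase plane as
`t ↦ (u t, u' t)`, with the same value at `c`; uniqueness for Lipschitz vector fields makes `u`
symmetric about `c`. Since `u` vanishes at both ends and nowhere in between, `c` is the midpoint.
-/

theorem IsCompact.exists_lipschitzOnWith_of_contDiffAt {E F : Type*} [NormedAddCommGroup E]
    [NormedSpace ℝ E] [NormedAddCommGroup F] [NormedSpace ℝ F] {g : E → F} {K : Set E}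
    (hK : IsCompact K) (hg : ∀ p ∈ K, ContDiffAt ℝ 1 g p) : ∃ C, LipschitzOnWith C g K := by
  refine LocallyLipschitzOn.exists_lipschitzOnWith_of_compact hK fun p hp ↦ ?_
  obtain ⟨C, t, ht, hC⟩ := (hg p hp).exists_lipschitzOnWith
  exact ⟨C, t, nhdsWithin_le_nhds ht, hC⟩

/-- The vector field of the first-order system `(u, v)' = (v, f (u, v))` equivalent to
`u'' = f (u, u')`. -/
def phaseField (f : ℝ × ℝ → ℝ) (p : ℝ × ℝ) : ℝ × ℝ := (p.2, f p)

section SecondOrder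

variable {f : ℝ × ℝ → ℝ} {u : ℝ → ℝ} {c r : ℝ}

theorem hasDerivAt_phaseField {t : ℝ} (h₁ : HasDerivAt u (deriv u t) t)
    (h₂ : HasDerivAt (deriv u) (f (u t, deriv u t)) t) :
    HasDerivAt (fun s ↦ (u s, deriv u s)) (phaseField f (u t, deriv u t)) t :=
  h₁.prodMk h₂

theorem hasDerivAt_phaseField_reflect (heven : ∀ x y, f (x, -y) = f (x, y)) {t : ℝ}
    (h₁ : HasDerivAt u (deriv u (2 * c - t)) (2 * c - t))
    (h₂ : HasDerivAt (deriv u) (f (u (2 * c - t), deriv u (2 * c - t))) (2 * c - t)) :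
    HasDerivAt (fun s ↦ (u (2 * c - s), -deriv u (2 * c - s)))
      (phaseField f (u (2 * c - t), -deriv u (2 * c - t))) t := by
  have hrefl : HasDerivAt (fun s : ℝ ↦ 2 * c - s) (-1) t := by
    simpa using (hasDerivAt_id t).const_sub (2 * c)
  refine ((h₁.comp t hrefl).prodMk (h₂.comp t hrefl).neg).congr_deriv ?_
  simp [phaseField, heven]

theorem symmetric_of_deriv_eq_zero (heven : ∀ x y, f (x, -y) = f (x, y)) (hr : 0 < r)
    (hu : ∀ t ∈ Icc (c - r) (c + r),
      HasDerivAt u (deriv u t) t ∧ HasDerivAt (deriv u) (f (u t, deriv u t)) t)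
    (hf : ∀ t ∈ Icc (c - r) (c + r), ContDiffAt ℝ 1 f (u t, deriv u t))
    (hc : deriv u c = 0) :
    ∀ t ∈ Icc (c - r) (c + r), u (2 * c - t) = u t := by
  set I := Icc (c - r) (c + r)
  set σ : ℝ × ℝ → ℝ × ℝ := fun p ↦ (p.1, -p.2)
  set F : ℝ → ℝ × ℝ := fun s ↦ (u s, deriv u s)
  have hreflI : MapsTo (fun s ↦ 2 * c - s) I I := fun s hs ↦ ⟨by linarith [hs.2], by linarith [hs.1]⟩
  have hF : ContinuousOn F I :=
    HasDerivAt.continuousOn fun t ht ↦ hasDerivAt_phaseField (hu t ht).1 (hu t ht).2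
  have hG : ContinuousOn (σ ∘ F ∘ fun s ↦ 2 * c - s) I :=
    (continuous_fst.prodMk continuous_snd.neg).comp_continuousOn
      (hF.comp (continuous_const.sub continuous_id).continuousOn hreflI)
  -- a compact set containing both phase curves, on which `phaseField f` is `C¹` since `f ∘ σ = f`
  set K := F '' I ∪ (σ ∘ F) '' I
  have hK : IsCompact K :=
    (isCompact_Icc.image_of_continuousOn hF).union
      (isCompact_Icc.image_of_continuousOn
        ((continuous_fst.prodMk continuous_snd.neg).comp_continuousOn hF))
  have hfK : ∀ p ∈ K, ContDiffAt ℝ 1 (phaseField f) p := by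
    have hfσ : f ∘ σ = f := funext fun p ↦ heven p.1 p.2
    rintro _ (⟨t, ht, rfl⟩ | ⟨t, ht, rfl⟩)
    · exact contDiffAt_snd.prodMk (hf t ht)
    · refine contDiffAt_snd.prodMk ?_
      rw [← hfσ]
      exact ContDiffAt.comp _ (by simpa [σ, F] using hf t ht)
        (contDiffAt_fst.prodMk contDiffAt_snd.neg)
  obtain ⟨C, hC⟩ := hK.exists_lipschitzOnWith_of_contDiffAt hfK
  have hsame := ODE_solution_unique_of_mem_Icc (v := fun _ ↦ phaseField f) (s := fun _ ↦ K)
    (fun _ _ ↦ hC) (t₀ := c) ⟨by linarith, by linarith⟩ hF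
    (fun t ht ↦ hasDerivAt_phaseField (hu t (Ioo_subset_Icc_self ht)).1
      (hu t (Ioo_subset_Icc_self ht)).2)
    (fun t ht ↦ Or.inl ⟨t, Ioo_subset_Icc_self ht, rfl⟩) hG
    (fun t ht ↦ hasDerivAt_phaseField_reflect heven
      (hu _ (hreflI (Ioo_subset_Icc_self ht))).1 (hu _ (hreflI (Ioo_subset_Icc_self ht))).2)
    (fun t ht ↦ Or.inr ⟨2 * c - t, hreflI (Ioo_subset_Icc_self ht), rfl⟩)
    (by simp [σ, F, hc, two_mul])
  exact fun t ht ↦ (congrArg Prod.fst (hsame ht)).symm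

end SecondOrder

theorem eq_midpoint_of_symmetric {u : ℝ → ℝ} {xl xr c : ℝ} (hc : c ∈ Ioo xl xr)
    (hl : u xl = 0) (hr : u xr = 0) (hpos : ∀ x ∈ Ioo xl xr, 0 < u x)
    (hsymm : ∀ r, 0 < r → xl ≤ c - r → c + r ≤ xr → u (c + r) = u (c - r)) :
    c = (xl + xr) / 2 := by
  obtain ⟨hlc, hcr⟩ := hc
  by_contra hne
  rcases lt_or_gt_of_ne hne with hlt | hgt
  · have h := hsymm (c - xl) (by linarith) (by linarith) (by linarith)
    rw [sub_sub_cancel, hl] at h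
    linarith [hpos (c + (c - xl)) ⟨by linarith, by linarith⟩]
  · have h := hsymm (xr - c) (by linarith) (by linarith) (by linarith)
    rw [add_sub_cancel, hr] at h
    linarith [hpos (c - (xr - c)) ⟨by linarith, by linarith⟩]

def odeRhs (κ lam : ℝ) (p : ℝ × ℝ) : ℝ := -(lam * p.1 * (1 + κ * p.2 ^ 2) ^ ((3 : ℝ) / 2))

theorem odeRhs_neg_snd (κ lam x y : ℝ) : odeRhs κ lam (x, -y) = odeRhs κ lam (x, y) := by
  simp [odeRhs]

theorem contDiffAt_odeRhs {κ lam : ℝ} {p : ℝ × ℝ} (hp : 0 < 1 + κ * p.2 ^ 2) :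
    ContDiffAt ℝ 1 (odeRhs κ lam) p :=
  ((contDiffAt_const.mul contDiffAt_fst).mul
    ((contDiffAt_const.add (contDiffAt_const.mul (contDiffAt_snd.pow 2))).rpow_const_of_ne
      hp.ne')).neg

namespace SolODE

variable {κ lam a b : ℝ} {u : ℝ → ℝ}

theorem continuousOn (hu : SolODE κ lam u a b) : ContinuousOn u (Icc a b) :=
  fun x hx ↦ (hu.1 x hx).continuousAt.continuousWithinAt

theorem hasDerivAt_deriv (hu : SolODE κ lam u a b) {x : ℝ} (hx : x ∈ Icc a b) :
    HasDerivAt (deriv u) (odeRhs κ lam (u x, deriv u x)) x := by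
  rw [odeRhs, ← hu.2.2.2.2 x hx, neg_neg]
  exact (hu.2.1 x hx).hasDerivAt

theorem strictAntiOn_deriv (hu : SolODE κ lam u a b) (hlam : 0 < lam)
    (hpos : ∀ x ∈ Ioo a b, 0 < u x) : StrictAntiOn (deriv u) (Icc a b) := by
  refine strictAntiOn_of_deriv_neg (convex_Icc a b)
    (fun x hx ↦ (hu.2.1 x hx).continuousAt.continuousWithinAt) fun x hx ↦ ?_
  rw [interior_Icc] at hx
  have hxI := Ioo_subset_Icc_self hx
  rw [(hu.hasDerivAt_deriv hxI).deriv, odeRhs, neg_neg_iff_pos]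
  exact mul_pos (mul_pos hlam (hpos x hx)) (rpow_pos_of_pos (hu.2.2.2.1 x hxI) _)

theorem symmetric_of_deriv_eq_zero (hu : SolODE κ lam u a b) {c r : ℝ} (hr : 0 < r)
    (ha : a ≤ c - r) (hb : c + r ≤ b) (hc : deriv u c = 0) :
    ∀ t ∈ Icc (c - r) (c + r), u (2 * c - t) = u t := by
  have hsub : Icc (c - r) (c + r) ⊆ Icc a b := Icc_subset_Icc ha hb
  exact _root_.symmetric_of_deriv_eq_zero (odeRhs_neg_snd κ lam) hr
    (fun t ht ↦ ⟨(hu.1 t (hsub ht)).hasDerivAt, hu.hasDerivAt_deriv (hsub ht)⟩)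
    (fun t ht ↦ contDiffAt_odeRhs (hu.2.2.2.1 t (hsub ht))) hc

end SolODE

theorem stmt3_general (κ lam xl xr : ℝ) (hlam : 0 < lam) (hx : xl < xr)
    (u : ℝ → ℝ) (hu : SolODE κ lam u xl xr) (hl : u xl = 0) (hr : u xr = 0)
    (hpos : ∀ x ∈ Set.Ioo xl xr, 0 < u x) :
    (∀ x ∈ Set.Icc xl xr, u (xl + xr - x) = u x) ∧
    StrictAntiOn (deriv u) (Set.Icc xl xr) ∧
    deriv u ((xl + xr) / 2) = 0 ∧
    (∀ x ∈ Set.Icc xl xr, deriv u x = 0 → x = (xl + xr) / 2) := by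
  have hanti := hu.strictAntiOn_deriv hlam hpos
  obtain ⟨c, hc, hc0⟩ := exists_deriv_eq_zero hx hu.continuousOn (hl.trans hr.symm)
  have hcm : c = (xl + xr) / 2 := eq_midpoint_of_symmetric hc hl hr hpos
    fun r hr₀ hxl hxr ↦ by
      simpa [two_mul] using
        hu.symmetric_of_deriv_eq_zero hr₀ hxl hxr hc0 (c - r) ⟨le_rfl, by linarith⟩
  subst hcm
  refine ⟨fun x hx' ↦ ?_, hanti, hc0, fun x hx' h0 ↦
    hanti.injOn hx' (Ioo_subset_Icc_self hc) (h0.trans hc0.symm)⟩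
  have hsymm := hu.symmetric_of_deriv_eq_zero (r := (xr - xl) / 2) (by linarith) (by linarith)
    (by linarith) hc0 x (by constructor <;> linarith [hx'.1, hx'.2])
  rwa [show 2 * ((xl + xr) / 2) - x = xl + xr - x by ring] at hsymm

theorem stmt3 (κ lam xl xr : ℝ) (hκ : κ ≠ 0) (hlam : 0 < lam) (hx : xl < xr)
    (u : ℝ → ℝ) (hu : SolODE κ lam u xl xr) (hl : u xl = 0) (hr : u xr = 0)
    (hpos : ∀ x ∈ Set.Ioo xl xr, 0 < u x) :
    (∀ x ∈ Set.Icc xl xr, u (xl + xr - x) = u x) ∧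
    StrictAntiOn (deriv u) (Set.Icc xl xr) ∧
    deriv u ((xl + xr) / 2) = 0 ∧
    (∀ x ∈ Set.Icc xl xr, deriv u x = 0 → x = (xl + xr) / 2) :=
  stmt3_general κ lam xl xr hlam hx u hu hl hr hpos
end
end

section
/- Let κ < 0, λ > 0 and let n ≥ 1 be an integer. If u is an S⁺ₙ-solution of problem (P) for parameters (κ, λ), then ‖u‖_∞ < 1/(2n√(−κ)), where ‖u‖_∞ = sup_{x ∈ [0,1]} |u(x)|. -/
/-!
Along a solution, `(1 + κ u'²)^(-1/2) - κλu²/2` is constant, so `|u|` takes one and the same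
value at every critical point of `u`, in particular at a maximum point of `|u|`. Among the
`n + 1` zeros of `u` in `[0, 1]` two lie at distance at most `1/n`, and by Rolle there is a
critical point `c` between them. Since `1 + κ u'² > 0` means `|u'| < 1/√(-κ)`, the mean value
theorem on either side of `c` gives `2 |u c| < 1/(n √(-κ))`.
-/

open Set Real Filter

noncomputable section

theorem Set.exists_finset_subset_card_eq_ncard {α : Type*} (s : Set α) :
    ∃ t : Finset α, ↑t ⊆ s ∧ t.card = s.ncard := by
  by_cases hs : s.Finite
  · exact ⟨hs.toFinset, by simp, (ncard_eq_toFinset_card s hs).symm⟩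
  · exact ⟨∅, by simp, by rw [Set.Infinite.ncard hs, Finset.card_empty]⟩

theorem Finset.exists_lt_sub_le_one_div_of_lt_card {S : Finset ℝ}
    (hS : ↑S ⊆ Set.Icc (0 : ℝ) 1) {n : ℕ} (hn : 0 < n) (hcard : n < S.card) :
    ∃ a ∈ S, ∃ b ∈ S, a < b ∧ b - a ≤ 1 / n := by
  have hnR : (0 : ℝ) < n := by exact_mod_cast hn
  -- the pigeonholes are the intervals `[k/n, (k+1)/n]`, `k < n`
  let box : ℝ → ℕ := fun x => min ⌊n * x⌋₊ (n - 1)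
  have hbox : ∀ x ∈ Set.Icc (0 : ℝ) 1, (box x : ℝ) ≤ n * x ∧ n * x ≤ box x + 1 := by
    intro x ⟨hx0, hx1⟩
    have hnx : 0 ≤ (n : ℝ) * x := by positivity
    refine ⟨(Nat.cast_le.2 (min_le_left _ _)).trans (Nat.floor_le hnx), ?_⟩
    rcases le_total ⌊(n : ℝ) * x⌋₊ (n - 1) with h | h
    · simp only [box, min_eq_left h]
      exact (Nat.lt_floor_add_one _).le
    · simp only [box, min_eq_right h, Nat.cast_pred hn]
      nlinarith
  obtain ⟨x, hx, y, hy, hxy, heq⟩ := exists_ne_map_eq_of_card_lt_of_maps_to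
    (t := range n) (by simpa using hcard) (f := box) (fun x _ => by simp [box]; omega)
  wlog hlt : x < y generalizing x y
  · exact this y hy x hx hxy.symm heq.symm (lt_of_le_of_ne (not_lt.1 hlt) hxy.symm)
  refine ⟨x, hx, y, hy, hlt, ?_⟩
  obtain ⟨hx₁, -⟩ := hbox x (hS hx)
  obtain ⟨-, hy₂⟩ := hbox y (hS hy)
  rw [heq] at hx₁
  rw [le_div_iff₀ hnR]
  linarith

theorem exists_deriv_eq_zero_isMaxOn_abs {f : ℝ → ℝ} {a b : ℝ} (hab : a < b)
    (hf : ContinuousOn f (Icc a b)) (ha : f a = 0) (hb : f b = 0) :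
    ∃ c ∈ Ioo a b, deriv f c = 0 ∧ IsMaxOn (fun x => |f x|) (Icc a b) c := by
  obtain ⟨c, hc, hmax⟩ : ∃ c ∈ Ioo a b, IsMaxOn (fun x => |f x|) (Icc a b) c := by
    obtain ⟨c, hc, hmax⟩ := isCompact_Icc.exists_isMaxOn (nonempty_Icc.2 hab.le) hf.abs
    by_cases hc' : c ∈ Ioo a b
    · exact ⟨c, hc', hmax⟩
    have hfc : |f c| = 0 := by
      obtain rfl | rfl : c = a ∨ c = b := by
        simpa [Icc_sdiff_Ioo_same hab.le] using mem_sdiff_of_mem hc hc'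
      · simp [ha]
      · simp [hb]
    refine ⟨(a + b) / 2, ⟨by linarith, by linarith⟩, fun x hx => ?_⟩
    exact ((hmax hx).trans hfc.le).trans (abs_nonneg _)
  refine ⟨c, hc, IsLocalExtr.deriv_eq_zero ?_, hmax⟩
  have hloc : IsLocalMax (fun x => |f x|) c := hmax.isLocalMax (Icc_mem_nhds hc.1 hc.2)
  rcases le_total 0 (f c) with h | h
  · refine Or.inr ?_
    filter_upwards [hloc] with x hx
    exact (le_abs_self _).trans (hx.trans (abs_of_nonneg h).le)
  · refine Or.inl ?_
    filter_upwards [hloc] with x hx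
    have : |f x| ≤ -f c := abs_of_nonpos h ▸ hx
    linarith [neg_abs_le (f x)]

theorem abs_sub_lt_mul_of_abs_deriv_lt {f : ℝ → ℝ} {a b L : ℝ} (hab : a < b)
    (hfc : ContinuousOn f (Icc a b)) (hfd : DifferentiableOn ℝ f (Ioo a b))
    (hL : ∀ x ∈ Ioo a b, |deriv f x| < L) : |f b - f a| < L * (b - a) := by
  obtain ⟨c, hc, hslope⟩ := exists_deriv_eq_slope f hab hfc hfd
  have hba : 0 < b - a := sub_pos.2 hab
  rw [eq_div_iff hba.ne'] at hslope
  rw [← hslope, abs_mul, abs_of_pos hba]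
  exact mul_lt_mul_of_pos_right (hL c hc) hba

theorem two_mul_abs_lt_of_eq_zero_of_eq_zero {f : ℝ → ℝ} {a b c L : ℝ} (hc : c ∈ Ioo a b)
    (hfc : ContinuousOn f (Icc a b)) (hfd : DifferentiableOn ℝ f (Ioo a b))
    (hL : ∀ x ∈ Ioo a b, |deriv f x| < L) (ha : f a = 0) (hb : f b = 0) :
    2 * |f c| < L * (b - a) := by
  have hleft := abs_sub_lt_mul_of_abs_deriv_lt hc.1
    (hfc.mono (Icc_subset_Icc_right hc.2.le)) (hfd.mono (Ioo_subset_Ioo_right hc.2.le))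
    (fun x hx => hL x (Ioo_subset_Ioo_right hc.2.le hx))
  have hright := abs_sub_lt_mul_of_abs_deriv_lt hc.2
    (hfc.mono (Icc_subset_Icc_left hc.1.le)) (hfd.mono (Ioo_subset_Ioo_left hc.1.le))
    (fun x hx => hL x (Ioo_subset_Ioo_left hc.1.le hx))
  rw [ha, sub_zero] at hleft
  rw [hb, zero_sub, abs_neg] at hright
  linarith

theorem exists_finset_zeros_of_ncard_eq {u : ℝ → ℝ} {n : ℕ} (hn : 1 ≤ n) (hu0 : u 0 = 0)
    (hu1 : u 1 = 0) (hcard : {x ∈ Ioo (0 : ℝ) 1 | u x = 0}.ncard = n - 1) :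
    ∃ S : Finset ℝ, ↑S ⊆ {x ∈ Icc (0 : ℝ) 1 | u x = 0} ∧ n < S.card := by
  obtain ⟨t, ht, htcard⟩ :=
    Set.exists_finset_subset_card_eq_ncard {x ∈ Ioo (0 : ℝ) 1 | u x = 0}
  have h1 : (1 : ℝ) ∉ t := fun h => lt_irrefl _ (ht h).1.2
  have h0 : (0 : ℝ) ∉ insert 1 t := by
    rw [Finset.mem_insert]
    rintro (h | h)
    · exact zero_ne_one h
    · exact lt_irrefl _ (ht h).1.1
  refine ⟨insert 0 (insert 1 t), ?_, ?_⟩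
  · intro x hx
    simp only [Finset.coe_insert, mem_insert_iff] at hx
    rcases hx with rfl | rfl | hx
    · exact ⟨left_mem_Icc.2 zero_le_one, hu0⟩
    · exact ⟨right_mem_Icc.2 zero_le_one, hu1⟩
    · exact ⟨Ioo_subset_Icc_self (ht hx).1, (ht hx).2⟩
  · rw [Finset.card_insert_of_notMem h0, Finset.card_insert_of_notMem h1]
    omega

/-- First integral of `-u'' = λ u (1 + κ u'²)^(3/2)`: multiply the equation by
`u' (1 + κ u'²)^(-3/2)` and integrate. -/
def energy (κ lam : ℝ) (u : ℝ → ℝ) (x : ℝ) : ℝ :=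
  (1 + κ * deriv u x ^ 2) ^ (-(1 / 2 : ℝ)) - κ * lam / 2 * u x ^ 2

theorem energy_of_deriv_eq_zero {κ lam : ℝ} {u : ℝ → ℝ} {x : ℝ} (hx : deriv u x = 0) :
    energy κ lam u x = 1 - κ * lam / 2 * u x ^ 2 := by
  simp [energy, hx]

namespace SolODE

variable {κ lam a b : ℝ} {u : ℝ → ℝ}

theorem differentiableOn (hu : SolODE κ lam u a b) : DifferentiableOn ℝ u (Icc a b) :=
  fun x hx => (hu.1 x hx).differentiableWithinAt

theorem hasDerivAt_energy (hu : SolODE κ lam u a b) {x : ℝ} (hx : x ∈ Icc a b) :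
    HasDerivAt (energy κ lam u) 0 x := by
  obtain ⟨hdu, hdu', -, hpos, hode⟩ := hu
  have hw : 0 < 1 + κ * deriv u x ^ 2 := hpos x hx
  have hinner : HasDerivAt (fun y => 1 + κ * deriv u y ^ 2)
      (κ * ((2 : ℕ) * deriv u x ^ 1 * deriv (deriv u) x)) x :=
    (((hdu' x hx).hasDerivAt.pow 2).const_mul κ).const_add 1
  have hsq : HasDerivAt (fun y => κ * lam / 2 * u y ^ 2)
      (κ * lam / 2 * ((2 : ℕ) * u x ^ 1 * deriv u x)) x :=
    ((hdu x hx).hasDerivAt.pow 2).const_mul (κ * lam / 2)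
  refine ((hinner.rpow_const (p := -(1 / 2 : ℝ)) (Or.inl hw.ne')).sub hsq).congr_deriv ?_
  set w := 1 + κ * deriv u x ^ 2
  have hu'' : deriv (deriv u) x = -(lam * u x * w ^ ((3 : ℝ) / 2)) := by
    linarith [hode x hx]
  have hcancel : w ^ (-(1 / 2 : ℝ) - 1) * w ^ ((3 : ℝ) / 2) = 1 := by
    rw [← Real.rpow_add hw]
    norm_num
  rw [hu'']
  linear_combination κ * lam * u x * deriv u x * hcancel

theorem energy_eq (hu : SolODE κ lam u a b) {x : ℝ} (hx : x ∈ Icc a b) :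
    energy κ lam u x = energy κ lam u a :=
  constant_of_has_deriv_right_zero
    (fun _ hy => (hu.hasDerivAt_energy hy).continuousAt.continuousWithinAt)
    (fun _ hy => (hu.hasDerivAt_energy (Ico_subset_Icc_self hy)).hasDerivWithinAt) x hx

theorem abs_eq_of_deriv_eq_zero (hu : SolODE κ lam u a b) (hκlam : κ * lam ≠ 0) {x y : ℝ}
    (hx : x ∈ Icc a b) (hy : y ∈ Icc a b) (hx' : deriv u x = 0) (hy' : deriv u y = 0) :
    |u x| = |u y| := by
  have h := (hu.energy_eq hx).trans (hu.energy_eq hy).symm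
  rw [energy_of_deriv_eq_zero hx', energy_of_deriv_eq_zero hy'] at h
  have hsq : u x ^ 2 = u y ^ 2 := by
    apply mul_left_cancel₀ (div_ne_zero hκlam two_ne_zero)
    linarith
  exact sq_eq_sq_iff_abs_eq_abs _ _ |>.1 hsq

theorem abs_deriv_lt (hu : SolODE κ lam u a b) (hκ : κ < 0) {x : ℝ} (hx : x ∈ Icc a b) :
    |deriv u x| < (√(-κ))⁻¹ := by
  have hκ' : 0 < -κ := neg_pos.2 hκ
  apply abs_lt_of_sq_lt_sq _ (by positivity)
  rw [inv_pow, Real.sq_sqrt hκ'.le, ← one_div, lt_div_iff₀ hκ']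
  nlinarith [hu.2.2.2.1 x hx]

end SolODE

theorem stmt14 (κ lam : ℝ) (hκ : κ < 0) (hlam : 0 < lam) (n : ℕ) (hn : 1 ≤ n)
    (u : ℝ → ℝ) (hu : SPlus κ lam n u) :
    supNorm u < 1 / (2 * n * Real.sqrt (-κ)) := by
  obtain ⟨⟨hsol, hu0, hu1⟩, -, hcard, -, -⟩ := hu
  obtain ⟨S, hSzero, hScard⟩ := exists_finset_zeros_of_ncard_eq hn hu0 hu1 hcard
  obtain ⟨a, ha, b, hb, hab, hba⟩ :=
    S.exists_lt_sub_le_one_div_of_lt_card (fun x hx => (hSzero hx).1) hn hScard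
  have hsub : Icc a b ⊆ Icc 0 1 := Icc_subset_Icc (hSzero ha).1.1 (hSzero hb).1.2
  obtain ⟨c₀, hc₀, hc₀'⟩ := exists_deriv_eq_zero hab (hsol.continuousOn.mono hsub)
    ((hSzero ha).2.trans (hSzero hb).2.symm)
  have hsmall : 2 * |u c₀| < (√(-κ))⁻¹ * (b - a) :=
    two_mul_abs_lt_of_eq_zero_of_eq_zero hc₀ (hsol.continuousOn.mono hsub)
      (hsol.differentiableOn.mono (Ioo_subset_Icc_self.trans hsub))
      (fun x hx => hsol.abs_deriv_lt hκ (hsub (Ioo_subset_Icc_self hx)))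
      (hSzero ha).2 (hSzero hb).2
  obtain ⟨c, hc, hc', hmax⟩ :=
    exists_deriv_eq_zero_isMaxOn_abs zero_lt_one hsol.continuousOn hu0 hu1
  have heq : |u c| = |u c₀| := hsol.abs_eq_of_deriv_eq_zero (mul_ne_zero hκ.ne hlam.ne')
    (Ioo_subset_Icc_self hc) (hsub (Ioo_subset_Icc_self hc₀)) hc' hc₀'
  have hsup : supNorm u ≤ |u c| :=
    csSup_le ((nonempty_Icc.2 zero_le_one).image _) (by rintro _ ⟨x, hx, rfl⟩; exact hmax hx)
  calc supNorm u ≤ |u c₀| := heq ▸ hsup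
    _ < (√(-κ))⁻¹ * (b - a) / 2 := by linarith
    _ ≤ (√(-κ))⁻¹ * (1 / n) / 2 := by gcongr
    _ = 1 / (2 * n * √(-κ)) := by field_simp
end
end
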